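/- arXiv:1910.00298 — 3 statements merged into one kernel-verified Lean document; each statement's English description precedes it below -/
import Mathlib

section
/- Let d be a positive integer, let σ be a nonzero real number, and let μ₁, …, μ_ℓ be pairwise distinct points in ℝ^d. Then the ℓ×ℓ real matrix R with entries R_{ij} = exp(−σ² ‖μ_i − μ_j‖²) (Euclidean norm) is symmetric positive definite; in particular, for every nonzero vector c ∈ ℝ^ℓ one has ∑_{i,j} c_i c_j exp(−σ² ‖μ_i − μ_j‖²) > 0. -/
/-!
With `a i = c i * exp (-σ² ‖μ i‖²)` the quadratic form is `∑ a i a j exp (2σ² ⟪μ i, μ j⟫)`.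
Expanding the exponential, and `⟪x, y⟫ ^ n` as a sum over words `α : Fin n → Fin d`, turns it into
a series of nonnegative terms `(2σ²)ⁿ / n! * (∑ i, a i * ∏ s, μ i (α s)) ^ 2`. If all of them
vanished, `a` would annihilate every polynomial evaluated at the nodes, in particular
`∏_{i' ≠ j} ⟪x - μ i', μ j - μ i'⟫`, which is nonzero at `μ j` only; hence `a j = 0` for all `j`.
-/

open Finset
open scoped RealInnerProductSpace Nat

theorem exp_neg_mul_norm_sub_sq {F : Type*} [NormedAddCommGroup F] [InnerProductSpace ℝ F]
    (σ : ℝ) (x y : F) :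
    Real.exp (-(σ ^ 2) * ‖x - y‖ ^ 2)
      = Real.exp (-(σ ^ 2) * ‖x‖ ^ 2) * Real.exp (-(σ ^ 2) * ‖y‖ ^ 2)
        * Real.exp (2 * σ ^ 2 * ⟪x, y⟫) := by
  rw [← Real.exp_add, ← Real.exp_add, norm_sub_sq_real]
  ring_nf

section

variable {ι κ : Type*} [Fintype ι] [Fintype κ]

theorem real_inner_pow_eq_sum_prod_mul_prod (x y : EuclideanSpace ℝ κ) (n : ℕ) :
    ⟪x, y⟫ ^ n = ∑ α : Fin n → κ, (∏ s, x (α s)) * ∏ s, y (α s) := by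
  simp [PiLp.inner_apply, mul_comm, sum_pow', prod_mul_distrib]

theorem sum_sum_mul_mul_inner_pow (a : ι → ℝ) (x : ι → EuclideanSpace ℝ κ) (n : ℕ) :
    ∑ i, ∑ j, a i * a j * ⟪x i, x j⟫ ^ n
      = ∑ α : Fin n → κ, (∑ i, a i * ∏ s, x i (α s)) ^ 2 := by
  simp_rw [real_inner_pow_eq_sum_prod_mul_prod, sq, sum_mul_sum, mul_sum]
  symm
  rw [sum_comm]
  refine sum_congr rfl fun i _ => ?_
  rw [sum_comm]
  exact sum_congr rfl fun j _ => sum_congr rfl fun α _ => by ring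

theorem hasSum_sum_sum_mul_mul_exp_mul_inner (a : ι → ℝ) (x : ι → EuclideanSpace ℝ κ) (t : ℝ) :
    HasSum (fun n => t ^ n / n ! * ∑ α : Fin n → κ, (∑ i, a i * ∏ s, x i (α s)) ^ 2)
      (∑ i, ∑ j, a i * a j * Real.exp (t * ⟪x i, x j⟫)) := by
  have hexp : ∀ i j, HasSum (fun n => a i * a j * (t * ⟪x i, x j⟫) ^ n / n !)
      (a i * a j * Real.exp (t * ⟪x i, x j⟫)) := fun i j => by
    simpa only [Real.exp_eq_exp_ℝ, mul_div_assoc] using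
      (NormedSpace.expSeries_div_hasSum_exp (t * ⟪x i, x j⟫)).mul_left (a i * a j)
  convert hasSum_sum fun i _ => hasSum_sum fun j _ => hexp i j using 2 with n
  rw [← sum_sum_mul_mul_inner_pow, mul_sum]
  refine sum_congr rfl fun i _ => ?_
  rw [mul_sum]
  exact sum_congr rfl fun j _ => by ring

def AnnihilatesMonomials (x : ι → EuclideanSpace ℝ κ) (b : ι → ℝ) : Prop :=
  ∀ n (α : Fin n → κ), ∑ i, b i * ∏ s, x i (α s) = 0

namespace AnnihilatesMonomials

variable {x : ι → EuclideanSpace ℝ κ} {b : ι → ℝ}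

theorem mul_inner_sub (h : AnnihilatesMonomials x b) (p v : EuclideanSpace ℝ κ) :
    AnnihilatesMonomials x fun i => b i * ⟪x i - p, v⟫ := by
  intro n α
  have hexpand : ∀ i, ⟪x i - p, v⟫ * ∏ s, x i (α s)
      = ∑ k, v k * ∏ s, x i ((Fin.cons k α : Fin (n + 1) → κ) s) - ⟪p, v⟫ * ∏ s, x i (α s) := by
    intro i
    simp [inner_sub_left, PiLp.inner_apply, Fin.prod_univ_succ, sub_mul, sum_mul, mul_assoc]
  calc ∑ i, b i * ⟪x i - p, v⟫ * ∏ s, x i (α s)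
      = ∑ k, v k * ∑ i, b i * ∏ s, x i ((Fin.cons k α : Fin (n + 1) → κ) s)
          - ⟪p, v⟫ * ∑ i, b i * ∏ s, x i (α s) := by
        simp_rw [mul_assoc, hexpand, mul_sub, sum_sub_distrib, mul_sum]
        congr 1
        · rw [sum_comm]; simp only [mul_left_comm]
        · simp only [mul_left_comm]
    _ = 0 := by simp [h _ α, h _ (Fin.cons _ α : Fin (n + 1) → κ)]

theorem mul_prod_inner_sub {τ : Type*} (h : AnnihilatesMonomials x b) (T : Finset τ)
    (p v : τ → EuclideanSpace ℝ κ) :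
    AnnihilatesMonomials x fun i => b i * ∏ t ∈ T, ⟪x i - p t, v t⟫ := by
  classical
  induction T using Finset.induction with
  | empty => simpa using h
  | insert t T ht ih =>
    convert ih.mul_inner_sub (p t) (v t) using 2 with i
    rw [prod_insert ht]
    ring

theorem eq_zero (hx : Function.Injective x) (h : AnnihilatesMonomials x b) : b = 0 := by
  classical
  funext j
  have hj := h.mul_prod_inner_sub (univ.erase j) x (fun i' => x j - x i') 0 Fin.elim0
  rw [sum_eq_single j] at hj
  · have hpos : 0 < ∏ i' ∈ univ.erase j, ⟪x j - x i', x j - x i'⟫ :=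
      prod_pos fun i' hi' => real_inner_self_pos.2 <|
        sub_ne_zero.2 fun hji' => (ne_of_mem_erase hi') (hx hji').symm
    rw [Fin.prod_univ_zero, mul_one] at hj
    exact (mul_eq_zero.1 hj).resolve_right hpos.ne'
  · intro i _ hij
    simp [prod_eq_zero (mem_erase.2 ⟨hij, mem_univ i⟩)]
  · simp

end AnnihilatesMonomials

theorem sum_sum_mul_mul_exp_neg_mul_norm_sub_sq_pos {σ : ℝ} (hσ : σ ≠ 0)
    {x : ι → EuclideanSpace ℝ κ} (hx : Function.Injective x) {c : ι → ℝ} (hc : c ≠ 0) :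
    0 < ∑ i, ∑ j, c i * c j * Real.exp (-(σ ^ 2) * ‖x i - x j‖ ^ 2) := by
  set a : ι → ℝ := fun i => c i * Real.exp (-(σ ^ 2) * ‖x i‖ ^ 2)
  have ha : a ≠ 0 := fun ha => hc <| funext fun i => by
    simpa [a, Real.exp_ne_zero] using congr_fun ha i
  have hgauss : ∑ i, ∑ j, c i * c j * Real.exp (-(σ ^ 2) * ‖x i - x j‖ ^ 2)
      = ∑ i, ∑ j, a i * a j * Real.exp (2 * σ ^ 2 * ⟪x i, x j⟫) := by
    refine sum_congr rfl fun i _ => sum_congr rfl fun j _ => ?_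
    rw [exp_neg_mul_norm_sub_sq]
    ring
  obtain ⟨n, α, hα⟩ : ∃ n, ∃ α : Fin n → κ, ∑ i, a i * ∏ s, x i (α s) ≠ 0 := by
    by_contra! h
    exact ha (AnnihilatesMonomials.eq_zero hx h)
  have hseries := hasSum_sum_sum_mul_mul_exp_mul_inner a x (2 * σ ^ 2)
  rw [hgauss]
  calc 0 < (2 * σ ^ 2) ^ n / n ! * (∑ i, a i * ∏ s, x i (α s)) ^ 2 := by positivity
    _ ≤ (2 * σ ^ 2) ^ n / n ! * ∑ α : Fin n → κ, (∑ i, a i * ∏ s, x i (α s)) ^ 2 := by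
      gcongr
      exact single_le_sum (f := fun α : Fin n → κ => (∑ i, a i * ∏ s, x i (α s)) ^ 2)
        (fun _ _ => sq_nonneg _) (mem_univ α)
    _ ≤ _ := le_hasSum hseries n fun m _ => by positivity

end

theorem gaussian_rbf_kernel_matrix_posDef_general
    (d : ℕ) (σ : ℝ) (hσ : σ ≠ 0) (ℓ : ℕ)
    (μ : Fin ℓ → EuclideanSpace ℝ (Fin d)) (hμ : Function.Injective μ) :
    (Matrix.of fun i j : Fin ℓ =>
        Real.exp (-(σ ^ 2) * ‖μ i - μ j‖ ^ 2)).PosDef ∧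
    ∀ c : Fin ℓ → ℝ, c ≠ 0 →
      0 < ∑ i, ∑ j, c i * c j * Real.exp (-(σ ^ 2) * ‖μ i - μ j‖ ^ 2) := by
  have hquad := fun c (hc : c ≠ 0) => sum_sum_mul_mul_exp_neg_mul_norm_sub_sq_pos hσ hμ hc
  refine ⟨.of_dotProduct_mulVec_pos ?_ fun c hc => ?_, hquad⟩
  · ext i j
    simp [norm_sub_rev]
  · simpa [dotProduct, Matrix.mulVec, mul_sum, mul_assoc, mul_comm] using hquad c hc

/-- The Gaussian RBF kernel matrix at pairwise distinct centers is symmetric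
positive definite; in particular the associated quadratic form is strictly
positive on nonzero vectors. -/
theorem gaussian_rbf_kernel_matrix_posDef
    (d : ℕ) (hd : 0 < d) (σ : ℝ) (hσ : σ ≠ 0) (ℓ : ℕ)
    (μ : Fin ℓ → EuclideanSpace ℝ (Fin d)) (hμ : Function.Injective μ) :
    (Matrix.of fun i j : Fin ℓ =>
        Real.exp (-(σ ^ 2) * ‖μ i - μ j‖ ^ 2)).PosDef ∧
    ∀ c : Fin ℓ → ℝ, c ≠ 0 →
      0 < ∑ i, ∑ j, c i * c j * Real.exp (-(σ ^ 2) * ‖μ i - μ j‖ ^ 2) :=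
  gaussian_rbf_kernel_matrix_posDef_general d σ hσ ℓ μ hμ
end

section
/- Let d be a positive integer, let σ > 0, and let μ₁, …, μ_ℓ be pairwise distinct points in ℝ^d. Then the ℓ×ℓ real matrix R with entries R_{ij} = 1/√(‖μ_i − μ_j‖² + σ²) (Euclidean norm) is symmetric positive definite; in particular, for every nonzero vector c ∈ ℝ^ℓ one has ∑_{i,j} c_i c_j /√(‖μ_i − μ_j‖² + σ²) > 0. -/
/-!
Both kernels are superpositions of Gaussians. For `b > 0`, Apollonius' theorem makes the
Gaussian kernel an autocorrelation,
`exp (-b‖x - y‖²) = C⁻¹ ∫ exp (-2b‖ω - x‖²) exp (-2b‖ω - y‖²) dω` with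
`C = ∫ exp (-4b‖ω‖²) dω`, so its quadratic form is `C⁻¹ ∫ (∑ᵢ cᵢ exp (-2b‖ω - xᵢ‖²))² dω`.
This is positive because Gaussian translates are linearly independent: up to the common factor
`exp (-2b‖ω‖²)` and nonzero constants they are the distinct characters `ω ↦ exp ⟪4b xᵢ, ω⟫`
of `(V, +)`, and distinct characters are linearly independent (Dedekind).
Finally `1 / √(r² + σ²) = π^(-1/2) ∫ exp (-σ²t²) exp (-t²r²) dt`.
-/

open Real MeasureTheory Function
open scoped RealInnerProductSpace

variable {V : Type*} [NormedAddCommGroup V] [InnerProductSpace ℝ V]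

noncomputable def expInnerChar (v : V) : Multiplicative V →* ℝ where
  toFun ω := exp ⟪v, ω.toAdd⟫
  map_one' := by simp
  map_mul' ω ω' := by simp [inner_add_right, exp_add]

theorem expInnerChar_injective : Injective (expInnerChar (V := V)) := by
  intro v w h
  have hinner (ω : V) : ⟪v - w, ω⟫ = 0 := by
    rw [inner_sub_left, sub_eq_zero]
    exact exp_injective (DFunLike.congr_fun h (Multiplicative.ofAdd ω))
  exact sub_eq_zero.mp (inner_self_eq_zero.mp (hinner (v - w)))

theorem linearIndependent_exp_inner :
    LinearIndependent ℝ (fun v : V => fun ω : V => exp ⟪v, ω⟫) :=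
  (linearIndependent_monoidHom (Multiplicative V) ℝ).comp _ expInnerChar_injective

theorem eq_zero_of_forall_sum_mul_exp_neg_mul_norm_sub_sq_eq_zero {ι : Type*} [Fintype ι]
    {b : ℝ} (hb : b ≠ 0) {x : ι → V} (hx : Injective x) {c : ι → ℝ}
    (h : ∀ ω, ∑ i, c i * exp (-b * ‖ω - x i‖ ^ 2) = 0) : c = 0 := by
  have hfactor (ω : V) (i : ι) : c i * exp (-b * ‖ω - x i‖ ^ 2) =
      exp (-b * ‖ω‖ ^ 2) * (c i * exp (-b * ‖x i‖ ^ 2) * exp ⟪(2 * b) • x i, ω⟫) := by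
    rw [mul_left_comm, mul_assoc, ← exp_add, ← exp_add, norm_sub_sq_real, real_inner_smul_left,
      real_inner_comm]
    ring_nf
  have hscaled : Injective fun i => (2 * b) • x i :=
    (smul_right_injective V (mul_ne_zero two_ne_zero hb)).comp hx
  have hcoeff := Fintype.linearIndependent_iff.mp (linearIndependent_exp_inner.comp _ hscaled)
    (fun i => c i * exp (-b * ‖x i‖ ^ 2)) <| funext fun ω => by
      have hsum := h ω
      simp_rw [hfactor, ← Finset.mul_sum] at hsum
      simpa using (mul_eq_zero.mp hsum).resolve_left (exp_ne_zero _)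
  funext i
  exact (mul_eq_zero.mp (hcoeff i)).resolve_right (exp_ne_zero _)

theorem exp_neg_mul_norm_sub_sq_mul_exp (b : ℝ) (ω x y : V) :
    exp (-(2 * b) * ‖ω - x‖ ^ 2) * exp (-(2 * b) * ‖ω - y‖ ^ 2) =
      exp (-(4 * b) * ‖ω - midpoint ℝ x y‖ ^ 2) * exp (-b * ‖x - y‖ ^ 2) := by
  have h := EuclideanGeometry.dist_sq_add_dist_sq_eq_two_mul_dist_midpoint_sq_add_half_dist_sq ω x y
  simp only [dist_eq_norm] at h
  rw [← exp_add, ← exp_add]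
  congr 1
  linear_combination (-2 * b) * h

section Integral

variable [FiniteDimensional ℝ V] [MeasurableSpace V] [BorelSpace V]

theorem integrable_exp_neg_mul_norm_sub_sq {b : ℝ} (hb : 0 < b) (x : V) :
    Integrable fun ω : V => exp (-b * ‖ω - x‖ ^ 2) := by
  refine Integrable.comp_sub_right (f := fun ω : V => exp (-b * ‖ω‖ ^ 2))
    (.of_integral_ne_zero ?_) x
  rw [GaussianFourier.integral_rexp_neg_mul_sq_norm hb]
  positivity

theorem integral_exp_neg_mul_norm_sub_sq_mul_exp (b : ℝ) (x y : V) :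
    ∫ ω, exp (-(2 * b) * ‖ω - x‖ ^ 2) * exp (-(2 * b) * ‖ω - y‖ ^ 2) =
      (∫ ω : V, exp (-(4 * b) * ‖ω‖ ^ 2)) * exp (-b * ‖x - y‖ ^ 2) := by
  simp_rw [exp_neg_mul_norm_sub_sq_mul_exp, integral_mul_const,
    integral_sub_right_eq_self fun ω : V => exp (-(4 * b) * ‖ω‖ ^ 2)]

end Integral

theorem sum_mul_exp_neg_mul_norm_sub_sq_pos [FiniteDimensional ℝ V] {ι : Type*} [Fintype ι]
    {b : ℝ} (hb : 0 < b) {x : ι → V} (hx : Injective x) {c : ι → ℝ} (hc : c ≠ 0) :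
    0 < ∑ i, ∑ j, c i * c j * exp (-b * ‖x i - x j‖ ^ 2) := by
  borelize V
  set g : ι → V → ℝ := fun i ω => exp (-(2 * b) * ‖ω - x i‖ ^ 2)
  have hg_mul_integrable (i j : ι) : Integrable fun ω => g i ω * g j ω := by
    simp_rw [g, exp_neg_mul_norm_sub_sq_mul_exp]
    exact (integrable_exp_neg_mul_norm_sub_sq (by positivity) _).mul_const _
  have hsq (ω : V) :
      (∑ i, c i * g i ω) ^ 2 = ∑ i, ∑ j, c i * c j * (g i ω * g j ω) := by
    simp_rw [sq, Fintype.sum_mul_sum, mul_mul_mul_comm]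
  have hsq_integrable :
      Integrable fun ω => ∑ i, ∑ j, c i * c j * (g i ω * g j ω) :=
    integrable_finsetSum _ fun i _ => integrable_finsetSum _ fun j _ =>
      (hg_mul_integrable i j).const_mul _
  obtain ⟨ω₀, hω₀⟩ : ∃ ω, ∑ i, c i * g i ω ≠ 0 := by
    by_contra! h
    exact hc (eq_zero_of_forall_sum_mul_exp_neg_mul_norm_sub_sq_eq_zero (by positivity) hx h)
  have hsq_pos : 0 < ∫ ω, (∑ i, c i * g i ω) ^ 2 :=
    integral_pos_of_integrable_nonneg_nonzero (x := ω₀) (by fun_prop)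
      (by simpa only [hsq] using hsq_integrable) (fun ω => sq_nonneg _) (pow_ne_zero 2 hω₀)
  have hC : 0 < ∫ ω : V, exp (-(4 * b) * ‖ω‖ ^ 2) := by
    rw [GaussianFourier.integral_rexp_neg_mul_sq_norm (by positivity)]
    positivity
  have hsq_integral : ∫ ω, (∑ i, c i * g i ω) ^ 2 =
      (∫ ω : V, exp (-(4 * b) * ‖ω‖ ^ 2)) * ∑ i, ∑ j, c i * c j * exp (-b * ‖x i - x j‖ ^ 2) := by
    simp_rw [hsq]
    rw [integral_finsetSum _ fun i _ => integrable_finsetSum _ fun j _ =>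
      (hg_mul_integrable i j).const_mul _, Finset.mul_sum]
    refine Finset.sum_congr rfl fun i _ => ?_
    rw [integral_finsetSum _ fun j _ => (hg_mul_integrable i j).const_mul _, Finset.mul_sum]
    refine Finset.sum_congr rfl fun j _ => ?_
    rw [integral_const_mul, integral_exp_neg_mul_norm_sub_sq_mul_exp]
    ring
  exact pos_of_mul_pos_right (hsq_integral ▸ hsq_pos) hC.le

theorem one_div_sqrt_eq_inv_sqrt_pi_mul_integral_exp (a : ℝ) :
    1 / √a = (√π)⁻¹ * ∫ t, exp (-a * t ^ 2) := by
  -- for `a ≤ 0` both sides are junk values `0`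
  have : √π ≠ 0 := (sqrt_pos.mpr pi_pos).ne'
  rw [integral_gaussian, sqrt_div pi_pos.le]
  field_simp

theorem sum_mul_div_sqrt_norm_sub_sq_add_sq_pos [FiniteDimensional ℝ V] {ι : Type*} [Fintype ι]
    {σ : ℝ} (hσ : σ ≠ 0) {x : ι → V} (hx : Injective x) {c : ι → ℝ} (hc : c ≠ 0) :
    0 < ∑ i, ∑ j, c i * c j / √(‖x i - x j‖ ^ 2 + σ ^ 2) := by
  set a : ι → ι → ℝ := fun i j => ‖x i - x j‖ ^ 2 + σ ^ 2
  set Q : ℝ → ℝ := fun t => ∑ i, ∑ j, c i * c j * exp (-a i j * t ^ 2)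
  have hterm_integrable (i j : ι) : Integrable fun t => c i * c j * exp (-a i j * t ^ 2) :=
    (integrable_exp_neg_mul_sq (by positivity)).const_mul _
  have hQ (t : ℝ) :
      Q t = exp (-σ ^ 2 * t ^ 2) * ∑ i, ∑ j, c i * c j * exp (-t ^ 2 * ‖x i - x j‖ ^ 2) := by
    simp_rw [Q, a, Finset.mul_sum]
    refine Finset.sum_congr rfl fun i _ => Finset.sum_congr rfl fun j _ => ?_
    rw [mul_left_comm, ← exp_add]
    ring_nf
  have hQ_pos (t : ℝ) (ht : t ≠ 0) : 0 < Q t := by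
    rw [hQ]
    have := sum_mul_exp_neg_mul_norm_sub_sq_pos (by positivity : 0 < t ^ 2) hx hc
    positivity
  have hQ_nonneg (t : ℝ) : 0 ≤ Q t := by
    rcases eq_or_ne t 0 with rfl | ht
    · simpa [Q, ← Fintype.sum_mul_sum] using mul_self_nonneg (∑ i, c i)
    · exact (hQ_pos t ht).le
  have hQ_integral_pos : 0 < ∫ t, Q t :=
    integral_pos_of_integrable_nonneg_nonzero (by fun_prop) (integrable_finsetSum _ fun i _ =>
      integrable_finsetSum _ fun j _ => hterm_integrable i j) hQ_nonneg (hQ_pos 1 one_ne_zero).ne'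
  calc 0 < (√π)⁻¹ * ∫ t, Q t := mul_pos (inv_pos.mpr (sqrt_pos.mpr pi_pos)) hQ_integral_pos
    _ = ∑ i, ∑ j, c i * c j / √(a i j) := by
      rw [integral_finsetSum _ fun i _ => integrable_finsetSum _ fun j _ => hterm_integrable i j,
        Finset.mul_sum]
      refine Finset.sum_congr rfl fun i _ => ?_
      rw [integral_finsetSum _ fun j _ => hterm_integrable i j, Finset.mul_sum]
      refine Finset.sum_congr rfl fun j _ => ?_
      rw [integral_const_mul, div_eq_mul_one_div (c i * c j),
        one_div_sqrt_eq_inv_sqrt_pi_mul_integral_exp]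
      ring

theorem inverse_multiquadric_rbf_kernel_matrix_posDef_general
    (d : ℕ) (σ : ℝ) (hσ : 0 < σ) (ℓ : ℕ)
    (μ : Fin ℓ → EuclideanSpace ℝ (Fin d)) (hμ : Function.Injective μ) :
    (Matrix.of fun i j : Fin ℓ =>
        1 / Real.sqrt (‖μ i - μ j‖ ^ 2 + σ ^ 2)).PosDef ∧
    ∀ c : Fin ℓ → ℝ, c ≠ 0 →
      0 < ∑ i, ∑ j, c i * c j / Real.sqrt (‖μ i - μ j‖ ^ 2 + σ ^ 2) := by
  have hform c (hc : c ≠ 0) := sum_mul_div_sqrt_norm_sub_sq_add_sq_pos hσ.ne' hμ hc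
  refine ⟨.of_dotProduct_mulVec_pos ?_ fun c hc => ?_, hform⟩
  · ext i j
    simp [norm_sub_rev]
  · refine (hform c hc).trans_eq ?_
    simp only [dotProduct, Matrix.mulVec, Matrix.of_apply, star_trivial, Finset.mul_sum]
    refine Finset.sum_congr rfl fun i _ => Finset.sum_congr rfl fun j _ => ?_
    ring

/-- The inverse multiquadric RBF kernel matrix at pairwise distinct centers is
symmetric positive definite; in particular the associated quadratic form is
strictly positive on nonzero vectors. -/
theorem inverse_multiquadric_rbf_kernel_matrix_posDef
    (d : ℕ) (hd : 0 < d) (σ : ℝ) (hσ : 0 < σ) (ℓ : ℕ)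
    (μ : Fin ℓ → EuclideanSpace ℝ (Fin d)) (hμ : Function.Injective μ) :
    (Matrix.of fun i j : Fin ℓ =>
        1 / Real.sqrt (‖μ i - μ j‖ ^ 2 + σ ^ 2)).PosDef ∧
    ∀ c : Fin ℓ → ℝ, c ≠ 0 →
      0 < ∑ i, ∑ j, c i * c j / Real.sqrt (‖μ i - μ j‖ ^ 2 + σ ^ 2) :=
  inverse_multiquadric_rbf_kernel_matrix_posDef_general d σ hσ ℓ μ hμ
end

section
/- Let σ > 0, let μ₁, …, μ_ℓ be pairwise distinct points in ℝ^d, and let c ∈ ℝ^ℓ be a nonzero vector satisfying ∑_{i=1}^ℓ c_i = 0. Then ∑_{i,j=1}^ℓ c_i c_j √(‖μ_i − μ_j‖² + σ²) < 0, where ‖·‖ is the Euclidean norm. That is, the multiquadric kernel Φ(r) = √(r² + σ²) is conditionally positive definite of order 1 up to sign: −Φ generates a quadratic form that is strictly positive on the hyperplane of coefficient vectors summing to zero. -/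
/-!
For `b > 0`, `√b` is a positive multiple of `∫₀^∞ s^(-3/2) (1 - e^(-b s)) ds`. Inserting this into
the quadratic form with `b = ‖μᵢ - μⱼ‖² + σ²`, the constant part `s^(-3/2)` is killed by
`∑ cᵢ = 0`, which leaves `-∫₀^∞ s^(-3/2) e^(-σ² s) ∑ cᵢ cⱼ e^(-s ‖μᵢ - μⱼ‖²) ds`. The Gaussian
quadratic form in the integrand is nonnegative (expand `e^(2s⟨μᵢ, μⱼ⟩)` into powers of the Gram
matrix) and tends to `∑ cᵢ² > 0` as `s → ∞` because the centres are distinct, so the integral is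
positive.
-/

open Real Finset MeasureTheory Filter Set

section

variable {ι κ : Type*} [Fintype ι] [Fintype κ]

theorem sum_mul_mul_sum_mul_pow_nonneg (e : ι → ℝ) (w : ι → κ → ℝ) (n : ℕ) :
    0 ≤ ∑ i, ∑ j, e i * e j * (∑ k, w i k * w j k) ^ n := by
  have hexpand : ∀ i j, (∑ k, w i k * w j k) ^ n
      = ∑ f : Fin n → κ, (∏ m, w i (f m)) * ∏ m, w j (f m) := by
    intro i j
    simp [sum_pow', prod_mul_distrib]
  calc 0 ≤ ∑ f : Fin n → κ, (∑ i, e i * ∏ m, w i (f m)) ^ 2 := by positivity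
    _ = _ := by
      simp_rw [sq, sum_mul_sum, hexpand, mul_sum]
      rw [sum_comm]
      refine sum_congr rfl fun i _ => ?_
      rw [sum_comm]
      exact sum_congr rfl fun j _ => sum_congr rfl fun f _ => by ring

theorem sum_mul_mul_exp_mul_inner_nonneg (e : ι → ℝ) (v : ι → EuclideanSpace ℝ κ) {t : ℝ}
    (ht : 0 ≤ t) :
    0 ≤ ∑ i, ∑ j, e i * e j * exp (t * inner ℝ (v i) (v j)) := by
  have hseries : ∀ i j, HasSum
      (fun n : ℕ => t ^ n / n.factorial * (e i * e j * inner ℝ (v i) (v j) ^ n))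
      (e i * e j * exp (t * inner ℝ (v i) (v j))) := by
    intro i j
    have hterm : (fun n : ℕ => t ^ n / n.factorial * (e i * e j * inner ℝ (v i) (v j) ^ n))
        = fun n => e i * e j * ((t * inner ℝ (v i) (v j)) ^ n / n.factorial) :=
      funext fun n => by ring
    have hexp := (summable_pow_div_factorial (t * inner ℝ (v i) (v j))).hasSum
    rw [hterm, exp_eq_exp_ℝ, NormedSpace.exp_eq_tsum_div]
    exact hexp.mul_left _
  refine (hasSum_sum fun i _ => hasSum_sum fun j _ => hseries i j).nonneg fun n => ?_
  simp_rw [← mul_sum]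
  refine mul_nonneg (by positivity) ?_
  simpa [PiLp.inner_apply, mul_comm] using sum_mul_mul_sum_mul_pow_nonneg e (fun i k => v i k) n

theorem sum_mul_mul_exp_neg_mul_norm_sub_sq_nonneg (c : ι → ℝ) (v : ι → EuclideanSpace ℝ κ)
    {t : ℝ} (ht : 0 ≤ t) :
    0 ≤ ∑ i, ∑ j, c i * c j * exp (-(t * ‖v i - v j‖ ^ 2)) := by
  have hsplit : ∀ i j, c i * c j * exp (-(t * ‖v i - v j‖ ^ 2))
      = (c i * exp (-(t * ‖v i‖ ^ 2))) * (c j * exp (-(t * ‖v j‖ ^ 2)))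
        * exp (2 * t * inner ℝ (v i) (v j)) := by
    intro i j
    rw [norm_sub_sq_real, mul_mul_mul_comm, mul_assoc (c i * c j), ← exp_add, ← exp_add]
    ring_nf
  simp_rw [hsplit]
  exact sum_mul_mul_exp_mul_inner_nonneg _ v (by positivity)

theorem tendsto_sum_mul_mul_exp_neg_mul_norm_sub_sq {E : Type*} [NormedAddCommGroup E]
    {v : ι → E} (hv : Function.Injective v) (c : ι → ℝ) :
    Tendsto (fun t => ∑ i, ∑ j, c i * c j * exp (-(t * ‖v i - v j‖ ^ 2))) atTop
      (nhds (∑ i, c i ^ 2)) := by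
  classical
  have hterm : ∀ i j, Tendsto (fun t => c i * c j * exp (-(t * ‖v i - v j‖ ^ 2))) atTop
      (nhds (if i = j then c i * c j else 0)) := by
    intro i j
    by_cases hij : i = j
    · subst hij
      simp
    · have hdist : 0 < ‖v i - v j‖ ^ 2 := by
        have := norm_pos_iff.2 (sub_ne_zero.2 (hv.ne hij))
        positivity
      simpa [hij] using (tendsto_exp_atBot.comp (tendsto_neg_atTop_atBot.comp
        (tendsto_id.atTop_mul_const hdist))).const_mul (c i * c j)
  have hsum := tendsto_finsetSum univ fun i _ => tendsto_finsetSum univ fun j _ => hterm i j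
  simpa [sq] using hsum

end

theorem setIntegral_Ioi_pos_of_eventually_pos {f : ℝ → ℝ} {a : ℝ} (hf : IntegrableOn f (Ioi a))
    (hnonneg : ∀ s ∈ Ioi a, 0 ≤ f s) (hpos : ∀ᶠ s in atTop, 0 < f s) :
    0 < ∫ s in Ioi a, f s := by
  rw [setIntegral_pos_iff_support_of_nonneg_ae
    ((ae_restrict_iff' measurableSet_Ioi).2 (.of_forall hnonneg)) hf]
  obtain ⟨b, hb⟩ := eventually_atTop.1 hpos
  refine lt_of_lt_of_le ?_ (measure_mono (s := Ioi (max a b)) fun s hs => ?_)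
  · simp
  · exact ⟨(hb s (le_max_right a b |>.trans hs.le)).ne', (le_max_left a b).trans_lt hs⟩

noncomputable def sqrtIntegrand (b s : ℝ) : ℝ := s ^ (-(3 / 2) : ℝ) * (1 - exp (-(b * s)))

theorem sqrtIntegrand_nonneg {b s : ℝ} (hb : 0 ≤ b) (hs : 0 ≤ s) : 0 ≤ sqrtIntegrand b s :=
  mul_nonneg (rpow_nonneg hs _) (sub_nonneg.2 (exp_le_one_iff.2 (by nlinarith)))

theorem sqrtIntegrand_pos {b s : ℝ} (hb : 0 < b) (hs : 0 < s) : 0 < sqrtIntegrand b s :=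
  mul_pos (rpow_pos_of_pos hs _) (sub_pos.2 (exp_lt_one_iff.2 (by nlinarith)))

theorem continuousOn_sqrtIntegrand (b : ℝ) : ContinuousOn (sqrtIntegrand b) (Ioi 0) :=
  (continuousOn_id.rpow_const fun s hs => Or.inl (ne_of_gt hs)).mul (by fun_prop)

theorem integrableOn_sqrtIntegrand {b : ℝ} (hb : 0 ≤ b) :
    IntegrableOn (sqrtIntegrand b) (Ioi 0) := by
  rw [← Ioc_union_Ioi_eq_Ioi zero_le_one]
  refine IntegrableOn.union ?_ ?_
  · have hdom : IntegrableOn (fun s : ℝ => b * s ^ (-(1 / 2) : ℝ)) (Ioc 0 1) :=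
      ((intervalIntegral.intervalIntegrable_rpow' (by norm_num)).1).const_mul b
    refine hdom.mono' (ContinuousOn.aestronglyMeasurable
      ((continuousOn_sqrtIntegrand b).mono Ioc_subset_Ioi_self) measurableSet_Ioc) ?_
    refine (ae_restrict_iff' measurableSet_Ioc).2 (.of_forall fun s hs => ?_)
    rw [norm_of_nonneg (sqrtIntegrand_nonneg hb hs.1.le)]
    calc sqrtIntegrand b s ≤ s ^ (-(3 / 2) : ℝ) * (b * s) :=
          mul_le_mul_of_nonneg_left (by linarith [add_one_le_exp (-(b * s))])
            (rpow_nonneg hs.1.le _)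
      _ = b * s ^ (-(1 / 2) : ℝ) := by
          rw [show (-(1 / 2) : ℝ) = -(3 / 2) + 1 by norm_num, rpow_add hs.1, rpow_one]
          ring
  · refine (integrableOn_Ioi_rpow_of_lt (by norm_num : (-(3 / 2) : ℝ) < -1) one_pos).mono'
      (ContinuousOn.aestronglyMeasurable
        ((continuousOn_sqrtIntegrand b).mono (Ioi_subset_Ioi zero_le_one)) measurableSet_Ioi) ?_
    refine (ae_restrict_iff' measurableSet_Ioi).2 (.of_forall fun s hs => ?_)
    have hs0 : (0 : ℝ) < s := zero_lt_one.trans hs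
    rw [norm_of_nonneg (sqrtIntegrand_nonneg hb hs0.le)]
    exact mul_le_of_le_one_right (rpow_nonneg hs0.le _) (sub_le_self _ (exp_pos _).le)

theorem integral_sqrtIntegrand {b : ℝ} (hb : 0 < b) :
    ∫ s in Ioi 0, sqrtIntegrand b s = √b * ∫ s in Ioi 0, sqrtIntegrand 1 s := by
  have hscale : ∀ s ∈ Ioi (0 : ℝ),
      sqrtIntegrand b s = b ^ (3 / 2 : ℝ) * sqrtIntegrand 1 (b * s) := by
    intro s hs
    rw [sqrtIntegrand, sqrtIntegrand, one_mul, mul_rpow hb.le (le_of_lt hs), ← mul_assoc,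
      ← mul_assoc, ← rpow_add hb]
    norm_num
  rw [setIntegral_congr_fun measurableSet_Ioi hscale, integral_const_mul,
    integral_comp_mul_left_Ioi (sqrtIntegrand 1) 0 hb, mul_zero, smul_eq_mul, ← mul_assoc,
    ← rpow_neg_one b, ← rpow_add hb, sqrt_eq_rpow]
  norm_num

theorem integral_sqrtIntegrand_one_pos : 0 < ∫ s in Ioi 0, sqrtIntegrand 1 s :=
  setIntegral_Ioi_pos_of_eventually_pos (integrableOn_sqrtIntegrand zero_le_one)
    (fun _ hs => sqrtIntegrand_nonneg zero_le_one (le_of_lt hs))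
    (eventually_gt_atTop 0 |>.mono fun _ hs => sqrtIntegrand_pos one_pos hs)

section

variable {ι : Type*} [Fintype ι]

theorem sum_mul_mul_sqrtIntegrand_add {c : ι → ℝ} (hc : ∑ i, c i = 0) (r : ι → ι → ℝ) (a s : ℝ) :
    ∑ i, ∑ j, c i * c j * sqrtIntegrand (r i j + a) s
      = -(s ^ (-(3 / 2) : ℝ) * exp (-(a * s)) * ∑ i, ∑ j, c i * c j * exp (-(s * r i j))) := by
  have hterm : ∀ i j, c i * c j * sqrtIntegrand (r i j + a) s = s ^ (-(3 / 2) : ℝ) * (c i * c j)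
      - s ^ (-(3 / 2) : ℝ) * exp (-(a * s)) * (c i * c j * exp (-(s * r i j))) := by
    intro i j
    rw [sqrtIntegrand, show -((r i j + a) * s) = -(a * s) + -(s * r i j) by ring, exp_add]
    ring
  simp [hterm, sum_sub_distrib, ← mul_sum, hc]

theorem integrableOn_sum_mul_mul_sqrtIntegrand (c : ι → ℝ) {r : ι → ι → ℝ}
    (hr : ∀ i j, 0 ≤ r i j) :
    IntegrableOn (fun s => ∑ i, ∑ j, c i * c j * sqrtIntegrand (r i j) s) (Ioi 0) :=
  integrable_finsetSum _ fun i _ => integrable_finsetSum _ fun j _ =>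
    (integrableOn_sqrtIntegrand (hr i j)).const_mul _

theorem sum_mul_mul_sqrt_eq_integral (c : ι → ℝ) {r : ι → ι → ℝ} (hr : ∀ i j, 0 < r i j) :
    ∑ i, ∑ j, c i * c j * √(r i j) = (∫ s in Ioi 0, sqrtIntegrand 1 s)⁻¹ *
      ∫ s in Ioi 0, ∑ i, ∑ j, c i * c j * sqrtIntegrand (r i j) s := by
  have hK := integral_sqrtIntegrand_one_pos.ne'
  have hint : ∀ i j, IntegrableOn (fun s => c i * c j * sqrtIntegrand (r i j) s) (Ioi 0) :=
    fun i j => (integrableOn_sqrtIntegrand (hr i j).le).const_mul _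
  rw [integral_finsetSum _ fun i _ => integrable_finsetSum _ fun j _ => hint i j, mul_sum]
  refine sum_congr rfl fun i _ => ?_
  rw [integral_finsetSum _ fun j _ => hint i j, mul_sum]
  refine sum_congr rfl fun j _ => ?_
  rw [integral_const_mul, integral_sqrtIntegrand (hr i j)]
  field_simp

end

/-- The multiquadric kernel is conditionally positive definite of order 1 up to
sign: its quadratic form is strictly negative on nonzero coefficient vectors
summing to zero, at pairwise distinct centers. -/
theorem multiquadric_conditionally_negative_definite
    (d : ℕ) (σ : ℝ) (hσ : 0 < σ) (ℓ : ℕ)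
    (μ : Fin ℓ → EuclideanSpace ℝ (Fin d)) (hμ : Function.Injective μ)
    (c : Fin ℓ → ℝ) (hc : c ≠ 0) (hsum : ∑ i, c i = 0) :
    ∑ i, ∑ j, c i * c j * Real.sqrt (‖μ i - μ j‖ ^ 2 + σ ^ 2) < 0 := by
  set Q : ℝ → ℝ := fun s => ∑ i, ∑ j, c i * c j * exp (-(s * ‖μ i - μ j‖ ^ 2))
  have hkernel : ∀ s, ∑ i, ∑ j, c i * c j * sqrtIntegrand (‖μ i - μ j‖ ^ 2 + σ ^ 2) s
      = -(s ^ (-(3 / 2) : ℝ) * exp (-(σ ^ 2 * s)) * Q s) :=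
    sum_mul_mul_sqrtIntegrand_add hsum _ _
  have hc_sq_pos : 0 < ∑ i, c i ^ 2 := by
    obtain ⟨i, hi⟩ := Function.ne_iff.1 hc
    exact sum_pos' (fun j _ => sq_nonneg (c j)) ⟨i, mem_univ i, sq_pos_of_ne_zero hi⟩
  have hG_int : IntegrableOn (fun s => s ^ (-(3 / 2) : ℝ) * exp (-(σ ^ 2 * s)) * Q s) (Ioi 0) := by
    refine (integrableOn_sum_mul_mul_sqrtIntegrand c (r := fun i j => ‖μ i - μ j‖ ^ 2 + σ ^ 2)
      fun i j => by positivity).neg.congr_fun (fun s _ => ?_) measurableSet_Ioi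
    simp only [Pi.neg_apply, hkernel, neg_neg]
  have hG_pos : 0 < ∫ s in Ioi 0, s ^ (-(3 / 2) : ℝ) * exp (-(σ ^ 2 * s)) * Q s := by
    refine setIntegral_Ioi_pos_of_eventually_pos hG_int (fun s hs => ?_) ?_
    · exact mul_nonneg (mul_nonneg (rpow_nonneg (le_of_lt hs) _) (exp_pos _).le)
        (sum_mul_mul_exp_neg_mul_norm_sub_sq_nonneg c μ (le_of_lt hs))
    · filter_upwards [eventually_gt_atTop 0,
        (tendsto_sum_mul_mul_exp_neg_mul_norm_sub_sq hμ c).eventually_const_lt hc_sq_pos]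
        with s hs hQs
      exact mul_pos (mul_pos (rpow_pos_of_pos hs _) (exp_pos _)) hQs
  rw [sum_mul_mul_sqrt_eq_integral c fun i j => by positivity, integral_congr_ae
    (.of_forall hkernel), integral_neg, mul_neg, neg_lt_zero]
  exact mul_pos (inv_pos.2 integral_sqrtIntegrand_one_pos) hG_pos
end
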